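/- If {(a_i,b_i) : 1 ≤ i ≤ n} is a Skolem sequence of order n, then the triples {0, i, b_i + n} (mod 6n+1) for 1 ≤ i ≤ n form base blocks of a cyclic Steiner triple system of order 6n+1. -/
import Mathlib


/-- A Skolem sequence of order `n` in pair form: a partition of `{1,...,2n}` into
pairs `(a i, b i)`, `1 ≤ i ≤ n`, with `b i - a i = i`. -/
def IsSkolem (n : ℕ) (a b : ℕ → ℕ) : Prop :=
  (∀ i, 1 ≤ i → i ≤ n → a i + i = b i) ∧
  (∀ x, (1 ≤ x ∧ x ≤ 2 * n) ↔ ∃ i, 1 ≤ i ∧ i ≤ n ∧ (x = a i ∨ x = b i)) ∧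
  (∀ i j, 1 ≤ i → i ≤ n → 1 ≤ j → j ≤ n → i ≠ j →
    a i ≠ a j ∧ a i ≠ b j ∧ b i ≠ a j ∧ b i ≠ b j)

/-- The six differences `±i, ±(b i + n), ±(b i + n - i)` of the base block
`{0, i, b i + n}` modulo `6n + 1`. -/
def skolemBlockDiffs' (n : ℕ) (b : ℕ → ℕ) (i : ℕ) : Fin 6 → ZMod (6 * n + 1)
  | 0 => (i : ZMod (6 * n + 1))
  | 1 => -(i : ZMod (6 * n + 1))
  | 2 => ((b i + n : ℕ) : ZMod (6 * n + 1))
  | 3 => -((b i + n : ℕ) : ZMod (6 * n + 1))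
  | 4 => ((b i + n - i : ℕ) : ZMod (6 * n + 1))
  | 5 => -((b i + n - i : ℕ) : ZMod (6 * n + 1))

/-- magnitude of the difference -/
def smag (n : ℕ) (b : ℕ → ℕ) (i : ℕ) (k : Fin 6) : ℕ :=
  if k.val < 2 then i else if k.val < 4 then b i + n else b i + n - i

/-- natural-number representative of the difference -/
def snval (n : ℕ) (b : ℕ → ℕ) (i : ℕ) (k : Fin 6) : ℕ :=
  if k.val % 2 = 0 then smag n b i k else 6 * n + 1 - smag n b i k

/-- From a Skolem sequence of order `n`, the triples `{0, i, b i + n} (mod 6n+1)`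
are base blocks of a cyclic Steiner triple system of order `6n+1`: their differences
cover every nonzero residue modulo `6n+1` exactly once. -/
theorem skolem_gives_csts' (n : ℕ) (a b : ℕ → ℕ) (h : IsSkolem n a b) :
    ∀ d : ZMod (6 * n + 1), d ≠ 0 →
      ∃! p : ℕ × Fin 6, p.1 ∈ Finset.Icc 1 n ∧ skolemBlockDiffs' n b p.1 p.2 = d := by
  obtain ⟨hab, hpart, hdist⟩ := h
  haveI : NeZero (6 * n + 1) := ⟨by omega⟩
  have hbnd : ∀ i, 1 ≤ i → i ≤ n → 1 ≤ a i ∧ a i ≤ 2 * n ∧ 1 ≤ b i ∧ b i ≤ 2 * n := by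
    intro i h1 h2
    have ha := (hpart (a i)).2 ⟨i, h1, h2, Or.inl rfl⟩
    have hb := (hpart (b i)).2 ⟨i, h1, h2, Or.inr rfl⟩
    exact ⟨ha.1, ha.2, hb.1, hb.2⟩
  have hcast : ∀ x y : ℕ, x < 6 * n + 1 → y < 6 * n + 1 →
      ((x : ZMod (6 * n + 1)) = (y : ZMod (6 * n + 1))) → x = y := by
    intro x y hx hy hxy
    have h1 := ZMod.val_cast_of_lt hx
    rw [hxy, ZMod.val_cast_of_lt hy] at h1
    omega
  have hneg : ∀ x : ℕ, x ≤ 6 * n →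
      -((x : ℕ) : ZMod (6 * n + 1)) = ((6 * n + 1 - x : ℕ) : ZMod (6 * n + 1)) := by
    intro x hx
    have hz : ((6 * n + 1 - x : ℕ) : ZMod (6 * n + 1)) + ((x : ℕ) : ZMod (6 * n + 1)) = 0 := by
      rw [← Nat.cast_add]
      have hxx : 6 * n + 1 - x + x = 6 * n + 1 := by omega
      rw [hxx]
      exact_mod_cast ZMod.natCast_self _
    linear_combination -hz
  have hmag : ∀ i (k : Fin 6), 1 ≤ i → i ≤ n →
      1 ≤ smag n b i k ∧ smag n b i k ≤ 3 * n := by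
    intro i k h1 h2
    obtain ⟨ha1, ha2, hb1, hb2⟩ := hbnd i h1 h2
    have hba := hab i h1 h2
    unfold smag
    split_ifs <;> constructor <;> omega
  have key : ∀ i (k : Fin 6), 1 ≤ i → i ≤ n →
      skolemBlockDiffs' n b i k = ((snval n b i k : ℕ) : ZMod (6 * n + 1)) := by
    intro i k h1 h2
    obtain ⟨ha1, ha2, hb1, hb2⟩ := hbnd i h1 h2
    have hba := hab i h1 h2
    fin_cases k
    · unfold snval smag; norm_num [skolemBlockDiffs']
    · unfold snval smag; norm_num [skolemBlockDiffs']
      rw [← hneg i (by omega)]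
    · unfold snval smag; norm_num [skolemBlockDiffs']
    · unfold snval smag; norm_num [skolemBlockDiffs']
      rw [← hneg (b i + n) (by omega)]
      push_cast; ring
    · unfold snval smag; norm_num [skolemBlockDiffs']
    · unfold snval smag; norm_num [skolemBlockDiffs']
      rw [← hneg (b i + n - i) (by omega)]
  have hsnval : ∀ i (k : Fin 6), 1 ≤ i → i ≤ n →
      1 ≤ snval n b i k ∧ snval n b i k ≤ 6 * n := by
    intro i k h1 h2
    obtain ⟨hm1, hm2⟩ := hmag i k h1 h2
    unfold snval
    split_ifs <;> constructor <;> omega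
  have hsmag_inj : ∀ i j (k l : Fin 6), 1 ≤ i → i ≤ n → 1 ≤ j → j ≤ n →
      smag n b i k = smag n b j l → i = j ∧ k.val / 2 = l.val / 2 := by
    intro i j k l hi1 hi2 hj1 hj2 heq
    obtain ⟨hai1, hai2, hbi1, hbi2⟩ := hbnd i hi1 hi2
    obtain ⟨haj1, haj2, hbj1, hbj2⟩ := hbnd j hj1 hj2
    have hbi := hab i hi1 hi2
    have hbj := hab j hj1 hj2
    have hk6 := k.isLt
    have hl6 := l.isLt
    by_cases hij : i = j
    · subst hij
      refine ⟨rfl, ?_⟩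
      unfold smag at heq
      split_ifs at heq <;> omega
    · obtain ⟨d1, d2, d3, d4⟩ := hdist i j hi1 hi2 hj1 hj2 hij
      unfold smag at heq
      exfalso
      split_ifs at heq <;> omega
  have hinj : ∀ p q : ℕ × Fin 6, 1 ≤ p.1 → p.1 ≤ n → 1 ≤ q.1 → q.1 ≤ n →
      skolemBlockDiffs' n b p.1 p.2 = skolemBlockDiffs' n b q.1 q.2 → p = q := by
    rintro ⟨i, k⟩ ⟨j, l⟩ hi1 hi2 hj1 hj2 heq
    simp only at hi1 hi2 hj1 hj2 heq ⊢
    rw [key i k hi1 hi2, key j l hj1 hj2] at heq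
    obtain ⟨hv1, hv2⟩ := hsnval i k hi1 hi2
    obtain ⟨hw1, hw2⟩ := hsnval j l hj1 hj2
    have heqn := hcast _ _ (by omega) (by omega) heq
    obtain ⟨hm1, hm2⟩ := hmag i k hi1 hi2
    obtain ⟨hn1, hn2⟩ := hmag j l hj1 hj2
    unfold snval at heqn
    have hpar : k.val % 2 = l.val % 2 ∧ smag n b i k = smag n b j l := by
      split_ifs at heqn <;> constructor <;> omega
    obtain ⟨hij, hdiv⟩ := hsmag_inj i j k l hi1 hi2 hj1 hj2 hpar.2
    have hk6 := k.isLt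
    have hl6 := l.isLt
    have hkl : k = l := Fin.ext (by omega)
    rw [hij, hkl]
  have hsurj : ∀ w, 1 ≤ w → w ≤ 3 * n → ∀ s : ℕ, s < 2 →
      ∃ p : ℕ × Fin 6, 1 ≤ p.1 ∧ p.1 ≤ n ∧ p.2.val % 2 = s ∧ smag n b p.1 p.2 = w := by
    intro w h1 h2 s hs
    by_cases hwn : w ≤ n
    · refine ⟨(w, ⟨s, by omega⟩), h1, hwn, by show s % 2 = s; omega, ?_⟩
      show smag n b w ⟨s, by omega⟩ = w
      unfold smag
      rw [if_pos (by show s < 2; omega)]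
    · obtain ⟨i, hi1, hi2, hcase⟩ := (hpart (w - n)).1 ⟨by omega, by omega⟩
      have hbi := hab i hi1 hi2
      rcases hcase with hA | hB
      · refine ⟨(i, ⟨4 + s, by omega⟩), hi1, hi2, by show (4 + s) % 2 = s; omega, ?_⟩
        show smag n b i ⟨4 + s, by omega⟩ = w
        unfold smag
        rw [if_neg (by show ¬ (4 + s < 2); omega), if_neg (by show ¬ (4 + s < 4); omega)]
        omega
      · refine ⟨(i, ⟨2 + s, by omega⟩), hi1, hi2, by show (2 + s) % 2 = s; omega, ?_⟩
        show smag n b i ⟨2 + s, by omega⟩ = w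
        unfold smag
        rw [if_neg (by show ¬ (2 + s < 2); omega), if_pos (by show 2 + s < 4; omega)]
        omega
  intro d hd
  have hv1 : 1 ≤ d.val := by
    rcases Nat.eq_zero_or_pos d.val with h0 | h0
    · exact absurd ((ZMod.val_eq_zero _).mp h0) hd
    · exact h0
  have hv2 : d.val < 6 * n + 1 := ZMod.val_lt d
  have hdval : ((d.val : ℕ) : ZMod (6 * n + 1)) = d := ZMod.natCast_rightInverse d
  by_cases hw : d.val ≤ 3 * n
  · obtain ⟨p, hp1, hp2, hp3, hp4⟩ := hsurj d.val hv1 hw 0 (by omega)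
    have hval : ((snval n b p.1 p.2 : ℕ) : ZMod (6 * n + 1)) = d := by
      unfold snval
      rw [if_pos hp3, hp4, hdval]
    refine ⟨p, ⟨Finset.mem_Icc.mpr ⟨hp1, hp2⟩, by rw [key p.1 p.2 hp1 hp2]; exact hval⟩, ?_⟩
    rintro q ⟨hq1, hq2⟩
    have hq1' := Finset.mem_Icc.mp hq1
    exact hinj q p hq1'.1 hq1'.2 hp1 hp2
      (hq2.trans (by rw [key p.1 p.2 hp1 hp2]; exact hval.symm))
  · obtain ⟨p, hp1, hp2, hp3, hp4⟩ := hsurj (6 * n + 1 - d.val) (by omega) (by omega) 1 (by omega)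
    have hval : ((snval n b p.1 p.2 : ℕ) : ZMod (6 * n + 1)) = d := by
      unfold snval
      rw [if_neg (by omega), hp4]
      rw [show 6 * n + 1 - (6 * n + 1 - d.val) = d.val by omega, hdval]
    refine ⟨p, ⟨Finset.mem_Icc.mpr ⟨hp1, hp2⟩, by rw [key p.1 p.2 hp1 hp2]; exact hval⟩, ?_⟩
    rintro q ⟨hq1, hq2⟩
    have hq1' := Finset.mem_Icc.mp hq1
    exact hinj q p hq1'.1 hq1'.2 hp1 hp2
      (hq2.trans (by rw [key p.1 p.2 hp1 hp2]; exact hval.symm))
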